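/- Let (A, (·,·), R) be a locally finite root supersystem over a field F of characteristic zero. If S is a connected component of R \ {0} (an equivalence class of the connectedness relation), then S ∪ {0} is an irreducible sub-supersystem of R. Moreover, R is the direct sum of irreducible sub-supersystems: there is a family {R_i}_{i∈I} of irreducible sub-supersystems of R which are pairwise orthogonal with respect to the form and such that R \ {0} is the disjoint union of the sets R_i \ {0}. -/

import Mathlib

open Pointwise

/-- A symmetric biadditive form with values in `F`. -/
structure IsSymForm {F : Type*} [Field F] {A : Type*} [AddCommGroup A]
    (form : A → A → F) : Prop where
  symm : ∀ a b, form a b = form b a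
  add_left : ∀ a b c, form (a + b) c = form a c + form b c

/-- The radical `A⁰` of a form. -/
def formRadical {F : Type*} [Field F] {A : Type*} [AddCommGroup A]
    (form : A → A → F) : Set A := {a | ∀ b, form a b = 0}

/-- The set of real roots `R_re = {α ∈ R | (α,α) ≠ 0} ∪ {0}`. -/
def reRoots {F : Type*} [Field F] {A : Type*} [AddCommGroup A]
    (form : A → A → F) (R : Set A) : Set A :=
  {α | α ∈ R ∧ form α α ≠ 0} ∪ {0}

/-- The set of nonsingular roots `R_ns = {α ∈ R \ A⁰ | (α,α) = 0} ∪ {0}`. -/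
def nsRoots {F : Type*} [Field F] {A : Type*} [AddCommGroup A]
    (form : A → A → F) (R : Set A) : Set A :=
  {α | α ∈ R ∧ form α α = 0 ∧ α ∉ formRadical form} ∪ {0}

/-- Extended affine root supersystem. -/
structure IsEARS {F : Type*} [Field F] [CharZero F] {A : Type*} [AddCommGroup A]
    (form : A → A → F) (R : Set A) extends IsSymForm form : Prop where
  zero_mem : (0 : A) ∈ R
  closure_eq_top : AddSubgroup.closure R = ⊤
  neg_mem : ∀ α ∈ R, -α ∈ R
  cartan : ∀ α ∈ R, form α α ≠ 0 → ∀ β ∈ R, ∃ k : ℤ, 2 * form α β = (k : F) * form α α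
  string : ∀ α ∈ R, form α α ≠ 0 → ∀ β ∈ R, ∃ p q : ℕ,
      2 * form β α = ((p : F) - (q : F)) * form α α ∧
      (∀ k : ℤ, β + k • α ∈ R ↔ -(p : ℤ) ≤ k ∧ k ≤ (q : ℤ))
  ns_string : ∀ α ∈ R, form α α = 0 → ∀ β ∈ R, form α β ≠ 0 →
      (β - α ∈ R ∨ β + α ∈ R)

/-- Locally finite root supersystem: an EARS with nondegenerate form. -/
def IsLFRSS {F : Type*} [Field F] [CharZero F] {A : Type*} [AddCommGroup A]
    (form : A → A → F) (R : Set A) : Prop :=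
  IsEARS form R ∧ ∀ a : A, (∀ b, form a b = 0) → a = 0

/-- `α` and `β` are connected in `X` by a finite chain with consecutive
elements non-orthogonal. -/
def ConnectedIn {F : Type*} [Field F] {A : Type*} [AddCommGroup A]
    (form : A → A → F) (X : Set A) (α β : A) : Prop :=
  ∃ (n : ℕ) (c : Fin (n + 1) → A), (∀ i, c i ∈ X) ∧ c 0 = α ∧ c (Fin.last n) = β ∧
    ∀ i : Fin n, form (c i.castSucc) (c i.succ) ≠ 0

/-- A connected subset. -/
def IsConnectedSet {F : Type*} [Field F] {A : Type*} [AddCommGroup A]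
    (form : A → A → F) (X : Set A) : Prop :=
  ∀ α ∈ X, ∀ β ∈ X, ConnectedIn form X α β

/-- Irreducibility: `R_re ≠ {0}` and `R \ R⁰` is connected. -/
def IsIrreducibleRSS {F : Type*} [Field F] {A : Type*} [AddCommGroup A]
    (form : A → A → F) (R : Set A) : Prop :=
  reRoots form R ≠ {0} ∧ IsConnectedSet form (R \ formRadical form)

/-- Sub-supersystem of a locally finite root supersystem. -/
def IsSubSupersystem {F : Type*} [Field F] {A : Type*} [AddCommGroup A]
    (form : A → A → F) (R S : Set A) : Prop :=
  S ⊆ R ∧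
  (∀ a ∈ AddSubgroup.closure S, (∀ b ∈ AddSubgroup.closure S, form a b = 0) → a = 0) ∧
  (0 : A) ∈ S ∧
  (∀ α ∈ S, form α α ≠ 0 → ∀ β ∈ S, ∀ k : ℤ,
      2 * form β α = (k : F) * form α α → β - k • α ∈ S) ∧
  (∀ γ ∈ S, form γ γ = 0 → ∀ β ∈ S, form β γ ≠ 0 → (γ - β ∈ S ∨ γ + β ∈ S))

/-- `Π` is an integral base of `R` (a `ℤ`-basis of the group generated by `R`). -/
def IsIntegralBase {F : Type*} [Field F] {A : Type*} [AddCommGroup A]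
    (form : A → A → F) (R P : Set A) : Prop :=
  P ⊆ R ∧ LinearIndependent ℤ (fun p : P => (p : A)) ∧
    Submodule.span ℤ P = Submodule.span ℤ R

/-- `Π` is a base of `R`. -/
def IsBase {F : Type*} [Field F] {A : Type*} [AddCommGroup A]
    (form : A → A → F) (R P : Set A) : Prop :=
  IsIntegralBase form R P ∧
  ∀ α ∈ R \ formRadical form, ∃ (n : ℕ) (a : Fin n → A) (r : Fin n → ℤ),
    (∀ i, a i ∈ P) ∧ (∀ i, r i = 1 ∨ r i = -1) ∧
    α = ∑ i, r i • a i ∧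
    ∀ t : Fin n, (∑ i ∈ Finset.Iic t, r i • a i) ∈ R \ formRadical form

/-!
A component `C` of `R \ {0}` is orthogonal to every root outside it, so by nondegeneracy an
element of the group generated by `C` that is orthogonal to `C` is orthogonal to all of `R`, hence
zero. A reflection `β - kα` of `β ∈ C` in a real root `α ∈ C` lies in `R` by the root-string axiom
and, unless `k = 0`, is not orthogonal to `α`, so it stays in `C`; the same argument handles
`γ ± β` for a nonsingular `γ`. Every component contains a real root: a nonsingular `α` pairs
nontrivially with some root `β`, and if `β` is nonsingular too, `(β ± α, β ± α) = ±2(α, β) ≠ 0`.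
-/

section

variable {F : Type*} [Field F] {A : Type*} [AddCommGroup A] {form : A → A → F}

namespace IsSymForm

variable (h : IsSymForm form)
include h

def leftHom (c : A) : A →+ F := AddMonoidHom.mk' (form · c) fun a b => h.add_left a b c

theorem zero_left (c : A) : form 0 c = 0 := (h.leftHom c).map_zero

theorem zero_right (c : A) : form c 0 = 0 := by rw [h.symm, h.zero_left]

theorem sub_left (a b c : A) : form (a - b) c = form a c - form b c := (h.leftHom c).map_sub a b

theorem zsmul_left (n : ℤ) (a c : A) : form (n • a) c = n * form a c := by
  rw [← zsmul_eq_mul]; exact (h.leftHom c).map_zsmul n a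

theorem add_right (a b c : A) : form c (a + b) = form c a + form c b := by
  rw [h.symm, h.add_left, h.symm a, h.symm b]

theorem sub_right (a b c : A) : form c (a - b) = form c a - form c b := by
  rw [h.symm, h.sub_left, h.symm a, h.symm b]

theorem left_ne_zero_of_form {a b : A} (hab : form a b ≠ 0) : a ≠ 0 := by
  rintro rfl; exact hab (h.zero_left b)

theorem right_ne_zero_of_form {a b : A} (hab : form a b ≠ 0) : b ≠ 0 := by
  rintro rfl; exact hab (h.zero_right a)

theorem form_eq_zero_of_mem_closure {S : Set A} {c : A} (hS : ∀ x ∈ S, form x c = 0) {a : A}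
    (ha : a ∈ AddSubgroup.closure S) : form a c = 0 :=
  (AddSubgroup.closure_le (h.leftHom c).ker).mpr hS ha

end IsSymForm

namespace ConnectedIn

variable {X : Set A} {α β γ : A}

theorem refl (hα : α ∈ X) : ConnectedIn form X α α :=
  ⟨0, fun _ => α, fun _ => hα, rfl, rfl, fun i => i.elim0⟩

theorem mem_right (h : ConnectedIn form X α β) : β ∈ X := by
  obtain ⟨n, c, hcX, -, hn, -⟩ := h
  exact hn ▸ hcX (Fin.last n)

theorem snoc (h : ConnectedIn form X α β) (hγ : γ ∈ X) (hβγ : form β γ ≠ 0) :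
    ConnectedIn form X α γ := by
  obtain ⟨n, c, hcX, h0, hn, hstep⟩ := h
  refine ⟨n + 1, Fin.snoc c γ, Fin.lastCases (by simpa using hγ) (by simpa using hcX), ?_,
    by simp, Fin.lastCases ?_ fun i => ?_⟩
  · rw [← Fin.castSucc_zero, Fin.snoc_castSucc, h0]
  · rwa [Fin.succ_last, Fin.snoc_last, Fin.snoc_castSucc, hn]
  · rw [Fin.snoc_castSucc, Fin.succ_castSucc, Fin.snoc_castSucc]
    exact hstep i

theorem restrict {P : Set A} (h : ConnectedIn form X α β) (hα : α ∈ P)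
    (hP : ∀ x ∈ P, ∀ y ∈ X, form x y ≠ 0 → y ∈ P) : ConnectedIn form P α β := by
  obtain ⟨n, c, hcX, h0, hn, hstep⟩ := h
  have hcP : ∀ i, c i ∈ P := Fin.induction (h0 ▸ hα) fun i hi => hP _ hi _ (hcX _) (hstep i)
  exact ⟨n, c, hcP, h0, hn, hstep⟩

theorem trans (hαβ : ConnectedIn form X α β) (hβγ : ConnectedIn form X β γ) :
    ConnectedIn form X α γ :=
  (hβγ.restrict (P := {y | ConnectedIn form X α y}) hαβ
    fun _ hx _ hy hxy => hx.snoc hy hxy).mem_right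

theorem symm (hsym : IsSymForm form) (h : ConnectedIn form X α β) : ConnectedIn form X β α := by
  obtain ⟨n, c, hcX, h0, hn, hstep⟩ := h
  refine ⟨n, c ∘ Fin.rev, fun i => hcX _, by simpa using hn, by simpa using h0, fun i => ?_⟩
  rw [Function.comp_apply, Function.comp_apply, Fin.rev_castSucc, Fin.rev_succ, hsym.symm]
  exact hstep i.rev

end ConnectedIn

def formComponent (form : A → A → F) (X : Set A) (α : A) : Set A :=
  {β ∈ X | ConnectedIn form X α β}

section formComponent

variable {X : Set A} {α β γ : A}

theorem mem_formComponent_self (hα : α ∈ X) : α ∈ formComponent form X α :=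
  ⟨hα, .refl hα⟩

theorem mem_formComponent_of_form_ne_zero (hβ : β ∈ formComponent form X α) (hγ : γ ∈ X)
    (hβγ : form β γ ≠ 0) : γ ∈ formComponent form X α :=
  ⟨hγ, hβ.2.snoc hγ hβγ⟩

theorem formComponent_eq_of_mem (hsym : IsSymForm form) (hβ : β ∈ formComponent form X α) :
    formComponent form X β = formComponent form X α := by
  ext γ
  exact and_congr_right fun _ => ⟨hβ.2.trans, (hβ.2.symm hsym).trans⟩

theorem isConnectedSet_formComponent (hsym : IsSymForm form) :
    IsConnectedSet form (formComponent form X α) :=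
  fun _ hx _ hy => ((hx.2.symm hsym).trans hy.2).restrict hx
    fun _ hu _ hv huv => mem_formComponent_of_form_ne_zero hu hv huv

theorem form_eq_zero_of_formComponent_ne (hsym : IsSymForm form)
    (hne : formComponent form X α ≠ formComponent form X β) {a b : A}
    (ha : a ∈ formComponent form X α) (hb : b ∈ formComponent form X β) : form a b = 0 := by
  by_contra hab
  have hbα := mem_formComponent_of_form_ne_zero ha hb.1 hab
  exact hne ((formComponent_eq_of_mem hsym hbα).symm.trans (formComponent_eq_of_mem hsym hb))

theorem disjoint_formComponent (hsym : IsSymForm form)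
    (hne : formComponent form X α ≠ formComponent form X β) :
    Disjoint (formComponent form X α) (formComponent form X β) :=
  Set.disjoint_left.mpr fun _ hα hβ =>
    hne ((formComponent_eq_of_mem hsym hα).symm.trans (formComponent_eq_of_mem hsym hβ))

variable {R : Set A}

theorem formComponent_union_zero_diff :
    (formComponent form (R \ {0}) α ∪ {0}) \ {0} = formComponent form (R \ {0}) α :=
  Set.union_sdiff_right.trans (Set.sdiff_singleton_eq_self fun h0 => h0.1.2 rfl)

theorem mem_formComponent_of_root (hsym : IsSymForm form)
    (hβ : β ∈ formComponent form (R \ {0}) α) (hγ : γ ∈ R) (hβγ : form β γ ≠ 0) :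
    γ ∈ formComponent form (R \ {0}) α :=
  mem_formComponent_of_form_ne_zero hβ ⟨hγ, hsym.right_ne_zero_of_form hβγ⟩ hβγ

end formComponent

variable [CharZero F] {R : Set A}

namespace IsEARS

variable (hR : IsEARS form R)
include hR

theorem sub_zsmul_mem {α β : A} (hα : α ∈ R) (hαα : form α α ≠ 0) (hβ : β ∈ R) {k : ℤ}
    (hk : 2 * form β α = k * form α α) : β - k • α ∈ R := by
  obtain ⟨p, q, hpq, hstring⟩ := hR.string α hα hαα β hβ
  have hk' : k = p - q := by
    have : (k : F) = p - q := mul_right_cancel₀ hαα (hk.symm.trans hpq)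
    exact_mod_cast this
  rw [sub_eq_add_neg, ← neg_zsmul, hstring]
  omega

theorem exists_real_root_form_ne_zero {α β : A} (hα : α ∈ R) (hαα : form α α = 0) (hβ : β ∈ R)
    (hαβ : form α β ≠ 0) : ∃ δ ∈ R, form α δ ≠ 0 ∧ form δ δ ≠ 0 := by
  have h := hR.toIsSymForm
  by_cases hββ : form β β = 0
  swap
  · exact ⟨β, hβ, hαβ, hββ⟩
  have h2αβ : 2 * form α β ≠ 0 := mul_ne_zero two_ne_zero hαβ
  rcases hR.ns_string α hα hαα β hβ hαβ with hmem | hmem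
  · refine ⟨β - α, hmem, by rwa [h.sub_right, hαα, sub_zero], ?_⟩
    rw [h.sub_left, h.sub_right, h.sub_right, hαα, hββ, h.symm β α]
    exact fun h0 => h2αβ (by linear_combination -h0)
  · refine ⟨β + α, hmem, by rwa [h.add_right, hαα, add_zero], ?_⟩
    rw [h.add_left, h.add_right, h.add_right, hαα, hββ, h.symm β α]
    exact fun h0 => h2αβ (by linear_combination h0)

variable {α₀ : A}

theorem sub_zsmul_mem_formComponent_union_zero {α β : A}
    (hα : α ∈ formComponent form (R \ {0}) α₀ ∪ {0}) (hαα : form α α ≠ 0)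
    (hβ : β ∈ formComponent form (R \ {0}) α₀ ∪ {0}) {k : ℤ}
    (hk : 2 * form β α = k * form α α) : β - k • α ∈ formComponent form (R \ {0}) α₀ ∪ {0} := by
  have h := hR.toIsSymForm
  rcases eq_or_ne k 0 with rfl | hk0
  · simpa using hβ
  have hαC : α ∈ formComponent form (R \ {0}) α₀ := hα.resolve_right (h.left_ne_zero_of_form hαα)
  have hβR : β ∈ R := hβ.elim (fun hβC => hβC.1.1) fun hβ0 => hβ0 ▸ hR.zero_mem
  have hαβ' : form α (β - k • α) ≠ 0 := by
    have e : 2 * form α (β - k • α) = -(k * form α α) := by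
      rw [h.symm, h.sub_left, h.zsmul_left]
      linear_combination hk
    intro h0
    rw [h0, mul_zero, eq_comm, neg_eq_zero] at e
    exact mul_ne_zero (Int.cast_ne_zero.mpr hk0) hαα e
  exact .inl (mem_formComponent_of_root h hαC (hR.sub_zsmul_mem hαC.1.1 hαα hβR hk) hαβ')

theorem add_or_sub_mem_formComponent_union_zero {γ β : A}
    (hγ : γ ∈ formComponent form (R \ {0}) α₀ ∪ {0}) (hγγ : form γ γ = 0)
    (hβ : β ∈ formComponent form (R \ {0}) α₀ ∪ {0}) (hβγ : form β γ ≠ 0) :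
    γ - β ∈ formComponent form (R \ {0}) α₀ ∪ {0} ∨
      γ + β ∈ formComponent form (R \ {0}) α₀ ∪ {0} := by
  have h := hR.toIsSymForm
  have hγC : γ ∈ formComponent form (R \ {0}) α₀ := hγ.resolve_right (h.right_ne_zero_of_form hβγ)
  have hβC : β ∈ formComponent form (R \ {0}) α₀ := hβ.resolve_right (h.left_ne_zero_of_form hβγ)
  have hγβ : form γ β ≠ 0 := by rwa [h.symm]
  rcases hR.ns_string γ hγC.1.1 hγγ β hβC.1.1 hγβ with hmem | hmem
  · have hmem' : γ - β ∈ R := by rw [← neg_sub]; exact hR.neg_mem _ hmem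
    refine .inl (.inl (mem_formComponent_of_root h hγC hmem' ?_))
    rwa [h.sub_right, hγγ, zero_sub, neg_ne_zero]
  · refine .inr (.inl (mem_formComponent_of_root h hγC (add_comm β γ ▸ hmem) ?_))
    rwa [h.add_right, hγγ, zero_add]

end IsEARS

namespace IsLFRSS

variable (hR : IsLFRSS form R)
include hR

theorem eq_zero_of_forall_form_root {a : A} (ha : ∀ β ∈ R, form a β = 0) : a = 0 := by
  have h := hR.1.toIsSymForm
  refine hR.2 a fun b => ?_
  have hb : b ∈ AddSubgroup.closure R := hR.1.closure_eq_top ▸ AddSubgroup.mem_top b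
  rw [h.symm]
  exact h.form_eq_zero_of_mem_closure (fun β hβ => (h.symm β a).trans (ha β hβ)) hb

theorem formRadical_eq_singleton_zero : formRadical form = {0} :=
  Set.eq_singleton_iff_unique_mem.mpr ⟨hR.1.zero_left, fun a ha => hR.2 a ha⟩

variable {α₀ : A}

theorem nondegenerate_closure_formComponent :
    ∀ a ∈ AddSubgroup.closure (formComponent form (R \ {0}) α₀ ∪ {0}),
      (∀ b ∈ AddSubgroup.closure (formComponent form (R \ {0}) α₀ ∪ {0}), form a b = 0) →
        a = 0 := by
  have h := hR.1.toIsSymForm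
  intro a ha hab
  refine hR.eq_zero_of_forall_form_root fun β hβ => ?_
  by_cases hβC : β ∈ formComponent form (R \ {0}) α₀ ∪ {0}
  · exact hab β (AddSubgroup.subset_closure hβC)
  · refine h.form_eq_zero_of_mem_closure ?_ ha
    rintro x (hx | hx)
    · by_contra hxβ
      exact hβC (.inl (mem_formComponent_of_root h hx hβ hxβ))
    · rw [Set.mem_singleton_iff.mp hx, h.zero_left]

theorem exists_real_root_mem_formComponent (hα : α₀ ∈ R \ {0}) :
    ∃ γ ∈ formComponent form (R \ {0}) α₀, form γ γ ≠ 0 := by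
  have h := hR.1.toIsSymForm
  have hαC := mem_formComponent_self (form := form) hα
  by_cases hαα : form α₀ α₀ = 0
  swap
  · exact ⟨α₀, hαC, hαα⟩
  obtain ⟨β, hβ, hαβ⟩ : ∃ β ∈ R, form α₀ β ≠ 0 := by
    by_contra! hβ
    exact hα.2 (hR.eq_zero_of_forall_form_root hβ)
  obtain ⟨δ, hδ, hαδ, hδδ⟩ := hR.1.exists_real_root_form_ne_zero hα.1 hαα hβ hαβ
  exact ⟨δ, mem_formComponent_of_root h hαC hδ hαδ, hδδ⟩

theorem isSubSupersystem_formComponent_union_zero :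
    IsSubSupersystem form R (formComponent form (R \ {0}) α₀ ∪ {0}) :=
  ⟨Set.union_subset (fun _ hβ => hβ.1.1) (Set.singleton_subset_iff.mpr hR.1.zero_mem),
    hR.nondegenerate_closure_formComponent, .inr rfl,
    fun _ hα hαα _ hβ _ hk => hR.1.sub_zsmul_mem_formComponent_union_zero hα hαα hβ hk,
    fun _ hγ hγγ _ hβ hβγ => hR.1.add_or_sub_mem_formComponent_union_zero hγ hγγ hβ hβγ⟩

theorem isIrreducibleRSS_formComponent_union_zero (hα : α₀ ∈ R \ {0}) :
    IsIrreducibleRSS form (formComponent form (R \ {0}) α₀ ∪ {0}) := by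
  have h := hR.1.toIsSymForm
  obtain ⟨γ, hγ, hγγ⟩ := hR.exists_real_root_mem_formComponent hα
  refine ⟨fun hre => hγγ ?_, ?_⟩
  · have hγre : γ ∈ reRoots form (formComponent form (R \ {0}) α₀ ∪ {0}) := .inl ⟨.inl hγ, hγγ⟩
    rw [hre, Set.mem_singleton_iff] at hγre
    rw [hγre, h.zero_left]
  · rw [hR.formRadical_eq_singleton_zero, formComponent_union_zero_diff]
    exact isConnectedSet_formComponent h

end IsLFRSS

end

theorem stmt6 {F : Type*} [Field F] [CharZero F] {A : Type*} [AddCommGroup A]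
    (form : A → A → F) (R : Set A) (h : IsLFRSS form R) :
    (∀ S : Set A,
      (∃ α ∈ R \ {0}, S = {β ∈ R \ {0} | ConnectedIn form (R \ {0}) α β}) →
      IsSubSupersystem form R (S ∪ {0}) ∧ IsIrreducibleRSS form (S ∪ {0})) ∧
    ∃ 𝒞 : Set (Set A),
      (∀ S ∈ 𝒞, IsSubSupersystem form R S ∧ IsIrreducibleRSS form S) ∧
      (∀ S ∈ 𝒞, ∀ T ∈ 𝒞, S ≠ T → ∀ a ∈ S, ∀ b ∈ T, form a b = 0) ∧
      (∀ S ∈ 𝒞, ∀ T ∈ 𝒞, S ≠ T → Disjoint (S \ {0}) (T \ {0})) ∧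
      R \ {0} = ⋃ S ∈ 𝒞, S \ {0} := by
  have hsym := h.1.toIsSymForm
  have hcomp : ∀ α ∈ R \ {0}, IsSubSupersystem form R (formComponent form (R \ {0}) α ∪ {0}) ∧
      IsIrreducibleRSS form (formComponent form (R \ {0}) α ∪ {0}) := fun α hα =>
    ⟨h.isSubSupersystem_formComponent_union_zero, h.isIrreducibleRSS_formComponent_union_zero hα⟩
  refine ⟨fun S ⟨α, hα, hS⟩ => hS ▸ hcomp α hα,
    (fun α => formComponent form (R \ {0}) α ∪ {0}) '' (R \ {0}), ?_, ?_, ?_, ?_⟩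
  · rintro _ ⟨α, hα, rfl⟩
    exact hcomp α hα
  · rintro _ ⟨α, -, rfl⟩ _ ⟨β, -, rfl⟩ hne a (ha | rfl) b (hb | rfl)
    · exact form_eq_zero_of_formComponent_ne hsym (fun hC => hne (congrArg (· ∪ {0}) hC)) ha hb
    · exact hsym.zero_right a
    all_goals exact hsym.zero_left _
  · rintro _ ⟨α, -, rfl⟩ _ ⟨β, -, rfl⟩ hne
    rw [formComponent_union_zero_diff, formComponent_union_zero_diff]
    exact disjoint_formComponent hsym fun hC => hne (congrArg (· ∪ {0}) hC)
  · ext β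
    simp only [Set.biUnion_image, formComponent_union_zero_diff, Set.mem_iUnion]
    exact ⟨fun hβ => ⟨β, hβ, mem_formComponent_self hβ⟩, fun ⟨_, _, hβ⟩ => hβ.1⟩
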